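/- Case analysis on morphisms in the concrete BCH cube category □: for every morphism f ∈ □(J, I0+1+I1), either (i) there exist an endpoint k ∈ Fin 2 and a morphism f' ∈ □(J, I0+I1) such that f = (sym_{1,I0}|id_{I1}) ∘ k_{I0+I1} ∘ f', or (ii) there exist natural numbers J0, J1 with J = J0+1+J1 and a morphism f' ∈ □(J0+J1, I0+I1) such that f = (sym_{1,I0}|id_{I1}) ∘ suc f' ∘ (sym_{J0,1}|id_{J1}). -/

import Mathlib

/-!
Everything is decided by the value of `f` at the middle coordinate `I0`. Since
`(sym_{1,I0}|id_{I1})` sends coordinate `I0` to `0` and the other coordinates, in order, to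
`1, 2, …`, we have `f = (sym_{1,I0}|id_{I1}) ∘ g` as soon as `g 0 = f I0` and `g` takes the
values of `f` at the other coordinates, in order, at `1, 2, …`.
If `f I0` is an endpoint `k`, take `g = k ∘ f'` with `f'` the restriction of `f` to the other
coordinates. If `f I0 = j` is a coordinate, injectivity says no other coordinate is sent to
`j`, so deleting `j` from the codomain of that restriction gives `f' ∈ □(J0+J1, I0+I1)` with
`J0 = j`, and `g = suc f' ∘ (sym_{J0,1}|id_{J1})` puts `j` back at the front.
-/

open CategoryTheory

namespace BCH

/-- The injectivity condition on the preimage of the left summand. -/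
def IsCube {J I : ℕ} (f : Fin I → Fin J ⊕ Fin 2) : Prop :=
  ∀ ⦃i i' : Fin I⦄ ⦃j : Fin J⦄, f i = Sum.inl j → f i' = Sum.inl j → i = i'

/-- A morphism of the BCH cube category `□(J,I)`. -/
def Hom (J I : ℕ) : Type :=
  {f : Fin I → Fin J ⊕ Fin 2 // IsCube f}

theorem Hom.ext {J I} {f g : Hom J I} (h : f.1 = g.1) : f = g := Subtype.ext h

/-- The identity morphism `id_I ∈ □(I,I)`. -/
def idH (I : ℕ) : Hom I I :=
  ⟨fun i => Sum.inl i, by intro i i' j h h'; simp_all⟩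

/-- Composition: `compH f g` is the paper's `f ∘ g ∈ □(K,I)`,
`g ∈ □(K,J)` followed by `f ∈ □(J,I)`. -/
def compH {K J I : ℕ} (f : Hom J I) (g : Hom K J) : Hom K I :=
  ⟨fun i => Sum.elim g.1 Sum.inr (f.1 i), by
    intro i i' k h h'
    dsimp only at h h'
    rcases hf : f.1 i with j | e
    · rcases hf' : f.1 i' with j' | e'
      · rw [hf] at h; rw [hf'] at h'
        simp only [Sum.elim_inl] at h h'
        have hjj : j = j' := g.2 h h'
        subst hjj
        exact f.2 hf hf'
      · rw [hf'] at h'; simp at h'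
    · rw [hf] at h; simp at h⟩

/-- `suc f ∈ □(1+J,1+I)` for `f ∈ □(J,I)`. -/
def sucH {J I : ℕ} (f : Hom J I) : Hom (1+J) (1+I) :=
  ⟨fun i =>
    if h : (i : ℕ) = 0 then Sum.inl ⟨0, by omega⟩
    else Sum.elim (fun j => Sum.inl ⟨1 + j.1, by have := j.2; omega⟩) Sum.inr
      (f.1 ⟨i.1 - 1, by have := i.2; omega⟩), by
    intro i i' j h h'
    dsimp only at h h'
    by_cases hi : (i : ℕ) = 0 <;> by_cases hi' : (i' : ℕ) = 0
    · exact Fin.ext (by omega)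
    · rw [dif_pos hi] at h
      rw [dif_neg hi'] at h'
      rcases hf' : f.1 ⟨i'.1 - 1, by have := i'.2; omega⟩ with a | e <;> rw [hf'] at h'
      · simp only [Sum.elim_inl, Sum.inl.injEq] at h h'
        rw [← h'] at h
        simp only [Sum.inl.injEq, Fin.ext_iff] at h
        omega
      · simp at h'
    · rw [dif_neg hi] at h
      rw [dif_pos hi'] at h'
      rcases hf : f.1 ⟨i.1 - 1, by have := i.2; omega⟩ with a | e <;> rw [hf] at h
      · simp only [Sum.elim_inl, Sum.inl.injEq] at h h'
        rw [← h'] at h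
        simp only [Sum.inl.injEq, Fin.ext_iff] at h
        omega
      · simp at h
    · rw [dif_neg hi] at h
      rw [dif_neg hi'] at h'
      rcases hf : f.1 ⟨i.1 - 1, by have := i.2; omega⟩ with a | e <;> rw [hf] at h
      · rcases hf' : f.1 ⟨i'.1 - 1, by have := i'.2; omega⟩ with a' | e' <;> rw [hf'] at h'
        · simp only [Sum.elim_inl, Sum.inl.injEq] at h h'
          rw [← h'] at h
          simp only [Fin.ext_iff] at h
          have haa : a = a' := Fin.ext (by omega)
          subst haa
          have := f.2 hf hf'
          simp only [Fin.ext_iff] at this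
          exact Fin.ext (by omega)
        · simp at h'
      · simp at h⟩

/-- The face map `k_I ∈ □(I,1+I)` for an endpoint `k : Fin 2`. -/
def faceH (k : Fin 2) (I : ℕ) : Hom I (1+I) :=
  ⟨fun i =>
    if h : (i : ℕ) = 0 then Sum.inr k
    else Sum.inl ⟨i.1 - 1, by have := i.2; omega⟩, by
    intro i i' j h h'
    dsimp only at h h'
    split_ifs at h h' with h1 h2 <;> simp_all [Fin.ext_iff] <;> omega⟩

/-- The degeneracy `R_I ∈ □(1+I,I)`. -/
def degH (I : ℕ) : Hom (1+I) I :=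
  ⟨fun i => Sum.inl ⟨1 + i.1, by have := i.2; omega⟩, by
    intro i i' j h h'
    simp only [Sum.inl.injEq, Fin.ext_iff] at h h'
    exact Fin.ext (by omega)⟩

/-- The symmetry `S_I ∈ □(2+I,2+I)` (with `2+I` written as `1+(1+I)`). -/
def symH (I : ℕ) : Hom (1+(1+I)) (1+(1+I)) :=
  ⟨fun i =>
    if (i : ℕ) = 0 then Sum.inl ⟨1, by omega⟩
    else if (i : ℕ) = 1 then Sum.inl ⟨0, by omega⟩
    else Sum.inl i, by
    intro i i' j h h'
    dsimp only at h h'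
    split_ifs at h h' <;> simp only [Sum.inl.injEq, Fin.ext_iff] at h h' <;> apply Fin.ext <;> omega⟩

/-- Transport a morphism along equalities of objects. -/
def castH {J J' I I' : ℕ} (hJ : J = J') (hI : I = I') (f : Hom J I) : Hom J' I' := by
  subst hJ; subst hI; exact f

/-- The generalised symmetry `(sym_{I0,1}|id_{I1}) ∈ □(I0+1+I1, 1+I0+I1)`. -/
def symL : (I0 I1 : ℕ) → Hom (I0+1+I1) (1+I0+I1)
  | 0, I1 => idH (1+I1)
  | I0+1, I1 =>
    castH (by omega) (by omega)
      (compH (symH (I0+I1)) (castH rfl (by omega) (sucH (symL I0 I1))))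

/-- The generalised symmetry `(sym_{1,I0}|id_{I1}) ∈ □(1+I0+I1, I0+1+I1)`. -/
def symR : (I0 I1 : ℕ) → Hom (1+I0+I1) (I0+1+I1)
  | 0, I1 => idH (1+I1)
  | I0+1, I1 =>
    castH (by omega) (by omega)
      (compH (castH (by omega) rfl (sucH (symR I0 I1))) (symH (I0+I1)))

theorem compH_val {K J I : ℕ} (f : Hom J I) (g : Hom K J) (i : Fin I) :
    (compH f g).1 i = Sum.elim g.1 Sum.inr (f.1 i) := rfl

theorem idH_val (I : ℕ) (i : Fin I) : (idH I).1 i = Sum.inl i := rfl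

theorem sucH_val {J I : ℕ} (f : Hom J I) (i : Fin (1+I)) :
    (sucH f).1 i = if h : (i : ℕ) = 0 then Sum.inl ⟨0, by omega⟩
      else Sum.elim (fun j => Sum.inl ⟨1 + j.1, by have := j.2; omega⟩) Sum.inr
        (f.1 ⟨i.1 - 1, by have := i.2; omega⟩) := rfl

theorem sucH_id (I : ℕ) : sucH (idH I) = idH (1+I) := by
  apply Hom.ext
  funext i
  rw [sucH_val, idH_val]
  split_ifs with h
  · exact congrArg Sum.inl (Fin.ext (by simp [h]))
  · rw [idH_val]
    simp only [Sum.elim_inl]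
    exact congrArg Sum.inl (Fin.ext (by have := i.2; simp; omega))

theorem sucH_comp {K J I : ℕ} (f : Hom J I) (g : Hom K J) :
    sucH (compH f g) = compH (sucH f) (sucH g) := by
  apply Hom.ext
  funext i
  rw [compH_val, sucH_val, sucH_val]
  split_ifs with h
  · rw [Sum.elim_inl, sucH_val]
    rw [dif_pos rfl]
  · rw [compH_val]
    rcases hf : f.1 ⟨i.1 - 1, by have := i.2; omega⟩ with j | e
    · simp only [Sum.elim_inl]
      rw [sucH_val, dif_neg (by simp)]
      have hj : (⟨(⟨1 + j.1, by have := j.2; omega⟩ : Fin (1+J)).1 - 1,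
          by simp⟩ : Fin J) = j := Fin.ext (by simp)
      rw [hj]
    · simp only [Sum.elim_inr]

/-- The BCH cube category: objects are natural numbers. -/
def Obj : Type := ℕ

/-- View a natural number as an object of the BCH cube category. -/
def mk (n : ℕ) : Obj := n

/-- View an object of the BCH cube category as a natural number. -/
def un (n : Obj) : ℕ := n

instance : Category Obj where
  Hom J I := BCH.Hom J I
  id I := idH I
  comp {X Y Z} (u : BCH.Hom X Y) (v : BCH.Hom Y Z) := compH v u
  id_comp := by
    intro X Y u
    apply Hom.ext
    funext i
    show Sum.elim (idH X).1 Sum.inr (u.1 i) = u.1 i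
    rcases h : u.1 i with j | e <;> simp [h, idH]
  comp_id := by
    intro X Y u
    apply Hom.ext
    funext i
    rfl
  assoc := by
    intro W X Y Z u v w
    apply Hom.ext
    funext i
    show Sum.elim (fun j => Sum.elim u.1 Sum.inr (v.1 j)) Sum.inr (w.1 i)
       = Sum.elim u.1 Sum.inr (Sum.elim v.1 Sum.inr (w.1 i))
    rcases h : w.1 i with j | e <;> simp

/-- The functor `suc : □ ⥤ □`. -/
def sucFunctor : Obj ⥤ Obj where
  obj I := mk (1 + un I)
  map {J I} f := sucH f
  map_id I := sucH_id (un I)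
  map_comp {K J I} g f := sucH_comp f g

theorem faceH_val (k : Fin 2) (I : ℕ) (i : Fin (1+I)) :
    (faceH k I).1 i = if h : (i : ℕ) = 0 then Sum.inr k
      else Sum.inl ⟨i.1 - 1, by have := i.2; omega⟩ := rfl

theorem degH_val (I : ℕ) (i : Fin I) :
    (degH I).1 i = Sum.inl ⟨1 + i.1, by have := i.2; omega⟩ := rfl

theorem symH_val (I : ℕ) (i : Fin (1+(1+I))) :
    (symH I).1 i = if (i : ℕ) = 0 then Sum.inl ⟨1, by omega⟩
      else if (i : ℕ) = 1 then Sum.inl ⟨0, by omega⟩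
      else Sum.inl i := rfl

theorem face_nat {J I : ℕ} (f : Hom J I) (k : Fin 2) :
    compH (faceH k I) f = compH (sucH f) (faceH k J) := by
  apply Hom.ext
  funext i
  rw [compH_val, compH_val, faceH_val, sucH_val]
  split_ifs with h
  · simp only [Sum.elim_inr, Sum.elim_inl]
    rw [faceH_val, dif_pos rfl]
  · simp only [Sum.elim_inl]
    rcases hf : f.1 ⟨i.1 - 1, by have := i.2; omega⟩ with j | e
    · simp only [Sum.elim_inl]
      rw [faceH_val, dif_neg (by simp)]
      exact congrArg Sum.inl (Fin.ext (by simp))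
    · simp only [Sum.elim_inr]

theorem deg_nat {J I : ℕ} (f : Hom J I) :
    compH (degH I) (sucH f) = compH f (degH J) := by
  apply Hom.ext
  funext i
  rw [compH_val, compH_val, degH_val]
  simp only [Sum.elim_inl]
  rw [sucH_val, dif_neg (by simp)]
  have hi : (⟨((⟨1 + i.1, by have := i.2; omega⟩ : Fin (1+I)) : ℕ) - 1,
      by exact (by have := i.2; omega : 1 + i.1 - 1 < I)⟩ : Fin I) = i :=
    Fin.ext (by simp)
  rw [hi]
  rcases hf : f.1 i with j | e
  · simp only [Sum.elim_inl]
    rw [degH_val]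
  · simp only [Sum.elim_inr]

set_option maxHeartbeats 1000000 in
theorem sym_nat {J I : ℕ} (f : Hom J I) :
    compH (symH I) (sucH (sucH f)) = compH (sucH (sucH f)) (symH J) := by
  apply Hom.ext
  funext i
  rw [compH_val, compH_val, symH_val]
  by_cases h0 : (i : ℕ) = 0
  · rw [if_pos h0]
    have hv : (sucH (sucH f)).1 i = Sum.inl ⟨0, by omega⟩ := by
      rw [sucH_val, dif_pos h0]
    have h2 : (sucH f).1 ⟨((⟨1, by omega⟩ : Fin (1+(1+I))) : ℕ) - 1,
        by exact (by omega : (1:ℕ) - 1 < 1 + I)⟩ = Sum.inl ⟨0, by omega⟩ := by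
      rw [sucH_val, dif_pos (by simp)]
    have hv1 : (sucH (sucH f)).1 ⟨1, by omega⟩ = Sum.inl ⟨1, by omega⟩ := by
      rw [sucH_val, dif_neg (by simp), h2, Sum.elim_inl]
      exact congrArg Sum.inl (Fin.ext (by simp))
    rw [Sum.elim_inl, hv1, hv, Sum.elim_inl, symH_val, if_pos rfl]
  · rw [if_neg h0]
    by_cases h1 : (i : ℕ) = 1
    · rw [if_pos h1]
      have h2 : (sucH f).1 ⟨i.1 - 1, by have := i.2; omega⟩ = Sum.inl ⟨0, by omega⟩ := by
        rw [sucH_val, dif_pos (by simp [h1])]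
      have hv : (sucH (sucH f)).1 i = Sum.inl ⟨1, by omega⟩ := by
        rw [sucH_val, dif_neg h0, h2, Sum.elim_inl]
        exact congrArg Sum.inl (Fin.ext (by simp))
      have hv0 : (sucH (sucH f)).1 ⟨0, by omega⟩ = Sum.inl ⟨0, by omega⟩ := by
        rw [sucH_val, dif_pos (by simp)]
      rw [Sum.elim_inl, hv0, hv, Sum.elim_inl, symH_val, if_neg (by simp), if_pos rfl]
    · rw [if_neg h1]
      have harg : (⟨((⟨i.1 - 1, by have := i.2; omega⟩ : Fin (1+I)) : ℕ) - 1,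
          by exact (by have := i.2; omega : i.1 - 1 - 1 < I)⟩ : Fin I)
          = ⟨i.1 - 1 - 1, by have := i.2; omega⟩ :=
        Fin.ext (by simp)
      rcases hf : f.1 ⟨i.1 - 1 - 1, by have := i.2; omega⟩ with j | e
      · have h2 : (sucH f).1 ⟨i.1 - 1, by have := i.2; omega⟩
            = Sum.inl ⟨1 + j.1, by have := j.2; omega⟩ := by
          rw [sucH_val, dif_neg (by exact (by omega : ¬(i.1 - 1 = 0))), harg, hf, Sum.elim_inl]
        have hv : (sucH (sucH f)).1 i
            = Sum.inl ⟨1 + (1 + j.1), by have := j.2; omega⟩ := by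
          rw [sucH_val, dif_neg h0, h2, Sum.elim_inl]
        rw [Sum.elim_inl, hv, Sum.elim_inl, symH_val, if_neg (by simp), if_neg (by simp)]
      · have h2 : (sucH f).1 ⟨i.1 - 1, by have := i.2; omega⟩ = Sum.inr e := by
          rw [sucH_val, dif_neg (by exact (by omega : ¬(i.1 - 1 = 0))), harg, hf, Sum.elim_inr]
        have hv : (sucH (sucH f)).1 i = Sum.inr e := by
          rw [sucH_val, dif_neg h0, h2, Sum.elim_inr]
        rw [Sum.elim_inl, hv, Sum.elim_inr]

/-- The face map as a morphism of the cube category. -/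
def faceA (k : Fin 2) (I : ℕ) : mk I ⟶ mk (1+I) := faceH k I

/-- The degeneracy as a morphism of the cube category. -/
def degA (I : ℕ) : mk (1+I) ⟶ mk I := degH I

/-- The symmetry as a morphism of the cube category. -/
def symA (I : ℕ) : mk (1+(1+I)) ⟶ mk (1+(1+I)) := symH I

theorem faceA_nat {J I : ℕ} (f : mk J ⟶ mk I) (k : Fin 2) :
    f ≫ faceA k I = faceA k J ≫ sucFunctor.map f := face_nat f k

theorem degA_nat {J I : ℕ} (f : mk J ⟶ mk I) :
    sucFunctor.map f ≫ degA I = degA J ≫ f := deg_nat f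

theorem symA_nat {J I : ℕ} (f : mk J ⟶ mk I) :
    sucFunctor.map (sucFunctor.map f) ≫ symA I = symA J ≫ sucFunctor.map (sucFunctor.map f) :=
  sym_nat f

/-- The precomposition endofunctor `∀̂` on presheaves over the BCH cube category. -/
def forallP : (Objᵒᵖ ⥤ Type) ⥤ (Objᵒᵖ ⥤ Type) :=
  (Functor.whiskeringLeft Objᵒᵖ Objᵒᵖ Type).obj sucFunctor.op

/-- The natural transformation `k̂_Γ : ∀̂Γ ⟶ Γ`. -/
def kHat (k : Fin 2) (Γ : Objᵒᵖ ⥤ Type) : forallP.obj Γ ⟶ Γ where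
  app X := Γ.map ((faceA k (un X.unop)).op)
  naturality := by
    intro X Y g
    show Γ.map (sucFunctor.map g.unop).op ≫ Γ.map (faceA k (un Y.unop)).op
        = Γ.map (faceA k (un X.unop)).op ≫ Γ.map g
    have h := congrArg Quiver.Hom.op (faceA_nat g.unop k)
    exact ((Γ.map_comp _ _).symm.trans (congrArg Γ.map h.symm)).trans (Γ.map_comp _ _)

/-- The natural transformation `R̂_Γ : Γ ⟶ ∀̂Γ`. -/
def RHat (Γ : Objᵒᵖ ⥤ Type) : Γ ⟶ forallP.obj Γ where
  app X := Γ.map ((degA (un X.unop)).op)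
  naturality := by
    intro X Y g
    show Γ.map g ≫ Γ.map (degA (un Y.unop)).op
        = Γ.map (degA (un X.unop)).op ≫ Γ.map (sucFunctor.map g.unop).op
    have h := congrArg Quiver.Hom.op (degA_nat g.unop)
    exact ((Γ.map_comp _ _).symm.trans (congrArg Γ.map h.symm)).trans (Γ.map_comp _ _)

/-- The natural transformation `Ŝ_Γ : ∀̂∀̂Γ ⟶ ∀̂∀̂Γ`. -/
def SHat (Γ : Objᵒᵖ ⥤ Type) : forallP.obj (forallP.obj Γ) ⟶ forallP.obj (forallP.obj Γ) where
  app X := Γ.map ((symA (un X.unop)).op)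
  naturality := by
    intro X Y g
    show Γ.map (sucFunctor.map (sucFunctor.map g.unop)).op ≫ Γ.map (symA (un Y.unop)).op
        = Γ.map (symA (un X.unop)).op ≫ Γ.map (sucFunctor.map (sucFunctor.map g.unop)).op
    have h := congrArg Quiver.Hom.op (symA_nat g.unop)
    exact ((Γ.map_comp _ _).symm.trans (congrArg Γ.map h.symm)).trans (Γ.map_comp _ _)

theorem castH_val {J J' I I' : ℕ} (hJ : J = J') (hI : I = I') (f : Hom J I) (i : Fin I') :
    (castH hJ hI f).1 i = Sum.map (Fin.cast hJ) id (f.1 (Fin.cast hI.symm i)) := by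
  subst hJ hI
  show f.1 i = Sum.map (Fin.cast rfl) id (f.1 i)
  rcases f.1 i with a | e <;> rfl

theorem castH_symm_castH {J J' I : ℕ} (hJ : J = J') (f : Hom J I) :
    castH hJ.symm rfl (castH hJ rfl f) = f := by
  subst hJ
  rfl

theorem symR_val (I0 I1 : ℕ) (i : Fin (I0+1+I1)) :
    (symR I0 I1).1 i = Sum.inl
      ⟨if i.1 < I0 then i.1 + 1 else if i.1 = I0 then 0 else i.1, by split_ifs <;> omega⟩ := by
  induction I0 with
  | zero =>
    simp only [symR, idH_val, Sum.inl.injEq, Fin.ext_iff]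
    split_ifs <;> omega
  | succ I0 ih =>
    rw [symR, castH_val, compH_val, castH_val, sucH_val]
    by_cases h0 : i.1 = 0
    · simp [h0, symH_val]
    · simp only [Fin.val_cast, h0, dite_false, ih, Sum.elim_inl, Sum.map_inl, symH_val]
      split_ifs <;> simp only [Sum.map_inl, Sum.inl.injEq, Fin.ext_iff, Fin.val_cast] <;> grind

theorem symL_val (J0 J1 : ℕ) (j : Fin (1+J0+J1)) :
    (symL J0 J1).1 j = Sum.inl
      ⟨if j.1 = 0 then J0 else if j.1 ≤ J0 then j.1 - 1 else j.1, by split_ifs <;> omega⟩ := by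
  induction J0 with
  | zero =>
    simp only [symL, idH_val, Sum.inl.injEq, Fin.ext_iff]
    split_ifs <;> omega
  | succ J0 ih =>
    rw [symL, castH_val, compH_val, symH_val]
    split_ifs <;> simp only [Sum.elim_inl, castH_val, sucH_val, Fin.val_cast] <;> split <;>
      simp only [ih, Sum.elim_inl, Sum.map_inl, Sum.inl.injEq, Fin.ext_iff, Fin.val_cast] <;>
      grind

def succAbove (I0 I1 : ℕ) (i : Fin (I0+I1)) : Fin (I0+1+I1) :=
  ⟨if i.1 < I0 then i.1 else i.1 + 1, by split_ifs <;> omega⟩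

theorem succAbove_injective (I0 I1 : ℕ) : Function.Injective (succAbove I0 I1) := by
  intro i i' h
  simp only [succAbove, Fin.ext_iff] at h
  ext
  split_ifs at h <;> omega

theorem exists_succAbove_eq {I0 I1 : ℕ} {i : Fin (I0+1+I1)} (hi : i.1 ≠ I0) :
    ∃ i', succAbove I0 I1 i' = i :=
  ⟨⟨if i.1 < I0 then i.1 else i.1 - 1, by split_ifs <;> omega⟩, by
    ext; simp only [succAbove]; split_ifs <;> omega⟩

theorem val_succAbove_ne (I0 I1 : ℕ) (i : Fin (I0+I1)) : (succAbove I0 I1 i).1 ≠ I0 := by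
  simp only [succAbove]
  split_ifs <;> omega

theorem symR_val_middle (I0 I1 : ℕ) :
    (symR I0 I1).1 ⟨I0, by omega⟩ = Sum.inl ⟨0, by omega⟩ := by
  simp [symR_val]

theorem symR_val_succAbove (I0 I1 : ℕ) (i : Fin (I0+I1)) :
    (symR I0 I1).1 (succAbove I0 I1 i) = Sum.inl ⟨1 + i.1, by omega⟩ := by
  rw [symR_val]
  simp only [succAbove, Sum.inl.injEq, Fin.ext_iff]
  split_ifs <;> omega

theorem symL_val_zero (J0 J1 : ℕ) :
    (symL J0 J1).1 ⟨0, by omega⟩ = Sum.inl ⟨J0, by omega⟩ := by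
  simp [symL_val]

theorem symL_val_succ (J0 J1 : ℕ) (j : Fin (J0+J1)) :
    (symL J0 J1).1 ⟨1 + j.1, by omega⟩ = Sum.inl (succAbove J0 J1 j) := by
  rw [symL_val]
  simp only [succAbove, Sum.inl.injEq, Fin.ext_iff]
  split_ifs <;> omega

def degAt (I0 I1 : ℕ) : Hom (I0+1+I1) (I0+I1) :=
  ⟨fun i => Sum.inl (succAbove I0 I1 i),
    fun _ _ _ h h' => succAbove_injective I0 I1 (Sum.inl_injective (h.trans h'.symm))⟩

theorem compH_degAt_val {J I0 I1 : ℕ} (f : Hom J (I0+1+I1)) (i : Fin (I0+I1)) :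
    (compH (degAt I0 I1) f).1 i = f.1 (succAbove I0 I1 i) :=
  rfl

def faceAt (k : Fin 2) (J0 J1 : ℕ) : Hom (J0+J1) (J0+1+J1) :=
  ⟨fun a =>
    if h : a.1 < J0 then Sum.inl ⟨a.1, by omega⟩
    else if h' : a.1 = J0 then Sum.inr k
    else Sum.inl ⟨a.1 - 1, by omega⟩, by
    intro a a' b h h'
    ext
    dsimp only at h h'
    split_ifs at h h' <;> simp only [Sum.inl.injEq, Fin.ext_iff] at h h' <;> omega⟩

theorem faceAt_val_succAbove (k : Fin 2) (J0 J1 : ℕ) (j : Fin (J0+J1)) :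
    (faceAt k J0 J1).1 (succAbove J0 J1 j) = Sum.inl j := by
  simp only [faceAt, succAbove]
  split_ifs <;> first | omega | congr 1

theorem sucH_val_zero {J I : ℕ} (f : Hom J I) :
    (sucH f).1 ⟨0, by omega⟩ = Sum.inl ⟨0, by omega⟩ :=
  rfl

theorem sucH_val_succ {J I : ℕ} (f : Hom J I) (i : Fin I) :
    (sucH f).1 ⟨1 + i.1, by omega⟩ = Sum.map (fun j => ⟨1 + j.1, by omega⟩) id (f.1 i) := by
  rw [sucH_val, dif_neg (by simp)]
  simp only [Nat.add_sub_cancel_left]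
  rcases f.1 i <;> rfl

theorem faceH_val_zero (k : Fin 2) (I : ℕ) : (faceH k I).1 ⟨0, by omega⟩ = Sum.inr k :=
  rfl

theorem faceH_val_succ (k : Fin 2) (I : ℕ) (i : Fin I) :
    (faceH k I).1 ⟨1 + i.1, by omega⟩ = Sum.inl i := by
  rw [faceH_val, dif_neg (by simp)]
  simp only [Nat.add_sub_cancel_left]

theorem eq_compH_symR {J I0 I1 : ℕ} (f : Hom J (I0+1+I1)) (g : Hom J (1+(I0+I1)))
    (h0 : g.1 ⟨0, by omega⟩ = f.1 ⟨I0, by omega⟩)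
    (hsucc : ∀ i, g.1 ⟨1 + i.1, by omega⟩ = f.1 (succAbove I0 I1 i)) :
    f = compH (symR I0 I1) (castH rfl (Nat.add_assoc 1 I0 I1).symm g) := by
  apply Hom.ext
  funext i
  rw [compH_val]
  by_cases hi : i.1 = I0
  · rw [show i = ⟨I0, by omega⟩ from Fin.ext hi, symR_val_middle, Sum.elim_inl, castH_val,
      Fin.cast_refl, Sum.map_id_id, id]
    exact h0.symm
  · obtain ⟨i', rfl⟩ := exists_succAbove_eq hi
    rw [symR_val_succAbove, Sum.elim_inl, castH_val, Fin.cast_refl, Sum.map_id_id, id]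
    exact (hsucc i').symm

theorem eq_symR_comp_faceH {J I0 I1 : ℕ} (f : Hom J (I0+1+I1)) {k : Fin 2}
    (hk : f.1 ⟨I0, by omega⟩ = Sum.inr k) :
    f = compH (symR I0 I1)
      (castH rfl (Nat.add_assoc 1 I0 I1).symm
        (compH (faceH k (I0+I1)) (compH (degAt I0 I1) f))) := by
  refine eq_compH_symR f _ ?_ fun i => ?_
  · rw [compH_val, faceH_val_zero, hk]
    rfl
  · rw [compH_val, faceH_val_succ]
    rfl

-- The endpoint `0` is arbitrary: off coordinate `I0`, `f` never takes the value `J0`.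
theorem eq_symR_comp_sucH_comp_symL {J0 J1 I0 I1 : ℕ} (f : Hom (J0+1+J1) (I0+1+I1))
    (hf : f.1 ⟨I0, by omega⟩ = Sum.inl ⟨J0, by omega⟩) :
    f = compH (symR I0 I1) (castH rfl (Nat.add_assoc 1 I0 I1).symm
      (compH (castH (Nat.add_assoc 1 J0 J1).symm rfl
          (sucH (compH (degAt I0 I1) (compH f (faceAt 0 J0 J1))))) (symL J0 J1))) := by
  refine eq_compH_symR f _ ?_ fun i => ?_
  · rw [compH_val, castH_val, Fin.cast_eq_self, sucH_val_zero, hf]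
    exact symL_val_zero J0 J1
  · rw [compH_val, castH_val, Fin.cast_eq_self, sucH_val_succ, compH_degAt_val, compH_val]
    rcases hx : f.1 (succAbove I0 I1 i) with a | e
    · have ha : a.1 ≠ J0 := fun ha => val_succAbove_ne I0 I1 i
        (congrArg Fin.val (f.2 hx (hf.trans (congrArg Sum.inl (Fin.ext ha.symm)))))
      obtain ⟨b, rfl⟩ := exists_succAbove_eq ha
      rw [Sum.elim_inl, faceAt_val_succAbove, Sum.map_inl, Sum.map_inl, Sum.elim_inl]
      exact symL_val_succ J0 J1 b
    · rfl

/-- case analysis on morphisms `f ∈ □(J, I0+1+I1)`. -/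
theorem case_analysis :
    ∀ (J I0 I1 : ℕ) (f : Hom J (I0+1+I1)),
      (∃ (k : Fin 2) (f' : Hom J (I0+I1)),
        f = compH (symR I0 I1) (castH rfl (by omega) (compH (faceH k (I0+I1)) f'))) ∨
      (∃ (J0 J1 : ℕ) (hJ : J = J0+1+J1) (f' : Hom (J0+J1) (I0+I1)),
        f = castH hJ.symm rfl (compH (symR I0 I1)
              (castH rfl (by omega)
                (compH (castH (by omega) rfl (sucH f')) (symL J0 J1))))) := by
  intro J I0 I1 f
  rcases hmid : f.1 ⟨I0, by omega⟩ with j | k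
  · right
    obtain ⟨J1, hJ⟩ : ∃ J1, J = j.1 + 1 + J1 := ⟨J - j.1 - 1, by omega⟩
    have hmid' : (castH hJ rfl f).1 ⟨I0, by omega⟩ = Sum.inl ⟨j.1, by omega⟩ := by
      rw [castH_val, Fin.cast_eq_self, hmid]
      rfl
    exact ⟨j.1, J1, hJ, _, (castH_symm_castH hJ f).symm.trans
      (congrArg (castH hJ.symm rfl) (eq_symR_comp_sucH_comp_symL _ hmid'))⟩
  · exact Or.inl ⟨k, _, eq_symR_comp_faceH f hmid⟩

end BCH
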